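/- For every classical propositional formula α whose propositional symbols are contained in {B_1,…,B_n}, Prob(α) = #{v : B_α → {0,1} : v ⊨ α} / 2^{|B_α|}; consequently Prob(α) = 1 if and only if α is a tautology. (This is the semantic core of the conservativeness result: in the uniform quantum structure, the probability of α equals 1 exactly when α is classically valid.) -/

import Mathlib

open scoped InnerProductSpace

noncomputable section

/-- Classical propositional formulas, built from propositional symbols `B_j` (`j : ℕ`)
and `⊤` using `¬` and `→`. -/
inductive PropForm : Type
  | verum : PropForm
  | var : ℕ → PropForm
  | neg : PropForm → PropForm
  | imp : PropForm → PropForm → PropForm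

namespace PropForm

/-- The (finite) set of propositional symbols occurring in a formula. -/
def symbols : PropForm → Finset ℕ
  | verum => ∅
  | var n => {n}
  | neg a => a.symbols
  | imp a b => a.symbols ∪ b.symbols

/-- Truth-table evaluation of a formula under a (total) assignment of truth values. -/
def eval (w : ℕ → Bool) : PropForm → Bool
  | verum => true
  | var n => w n
  | neg a => !(a.eval w)
  | imp a b => !(a.eval w) || b.eval w

end PropForm

/-- A valuation `v` on a set `A` of propositional symbols (with `A ⊇ B_α`) satisfies `α`. -/
def Sat (A : Finset ℕ) (v : {k // k ∈ A} → Bool) (α : PropForm) : Prop :=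
  PropForm.eval (fun k => if h : k ∈ A then v ⟨k, h⟩ else false) α = true

instance (A : Finset ℕ) (α : PropForm) : DecidablePred (fun v => Sat A v α) := fun _ => by
  unfold Sat; infer_instance

variable {H : Type*} [NormedAddCommGroup H] [InnerProductSpace ℂ H] [CompleteSpace H]

/-- The rank-one operator `|x⟩⟨y| : z ↦ ⟨y, z⟩ • x`. -/
def ketbra (x y : H) : H →L[ℂ] H :=
  (innerSL ℂ y).smulRight x

/-- The orthogonal projection `Q_j = Σ_{v : v(j)=1} |u_v⟩⟨u_v|`. -/
def Qop (n : ℕ) (u : (Fin n → Bool) → H) (j : Fin n) : H →L[ℂ] H :=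
  ∑ v ∈ Finset.univ.filter (fun v : Fin n → Bool => v j = true), ketbra (u v) (u v)

/-- The uniform state `ψ = Σ_v 2^{-n/2}·u_v`. -/
def psiUnif (n : ℕ) (u : (Fin n → Bool) → H) : H :=
  ∑ v : Fin n → Bool, ((Real.sqrt (2 ^ n) : ℂ))⁻¹ • u v

/-- The probability of the classical formula `α` in the uniform state `ψ`:
the sum, over valuations `v` on `B_α` satisfying `α`, of
`Re ⟪ψ, T_{j_k}^v(⋯ (T_{j_1}^v ψ) ⋯)⟫` where `B_α = {j_1 < … < j_k}` and
`T_j^v = Q_j` when `v(j) = 1` and `T_j^v = id − Q_j` otherwise. -/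
def ProbU (n : ℕ) (u : (Fin n → Bool) → H) (α : PropForm) : ℝ :=
  ∑ v ∈ Finset.univ.filter (fun v : {k // k ∈ α.symbols} → Bool => Sat α.symbols v α),
    (⟪psiUnif n u, (α.symbols.sort (· ≤ ·)).foldl
        (fun x s => if hs : s ∈ α.symbols then
            if hsn : s < n then
              (if v ⟨s, hs⟩ then Qop n u ⟨s, hsn⟩ x else x - Qop n u ⟨s, hsn⟩ x)
            else x
          else x) (psiUnif n u)⟫_ℂ).re

/-! Writing `ψ = 2^{-n/2} ∑_w u_w`, each factor `T_j^v` keeps exactly the basis vectors `u_w` with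
`w j = v j`, so `T_{j_k}^v ⋯ T_{j_1}^v ψ` is `2^{-n/2}` times the sum of the `u_w` over the
`2^{n - |B_α|}` valuations `w` extending `v`. Its inner product with `ψ` is therefore
`2^{-|B_α|}` for every `v`, and `Prob(α)` is the fraction of valuations satisfying `α`. -/

open Finset

theorem card_filter_forall_mem_eq {ι β : Type*} [Fintype ι] [DecidableEq ι] [Fintype β]
    [DecidableEq β] (T : Finset ι) (f : ∀ i ∈ T, β) :
    #{w : ι → β | ∀ i (h : i ∈ T), w i = f i h} = Fintype.card β ^ (Fintype.card ι - #T) := by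
  have hpi : ({w : ι → β | ∀ i (h : i ∈ T), w i = f i h} : Finset (ι → β)) =
      Fintype.piFinset fun i => if h : i ∈ T then {f i h} else univ := by
    ext w
    simp only [mem_filter, mem_univ, true_and, Fintype.mem_piFinset]
    refine forall_congr' fun i => ?_
    split_ifs with h <;> simp [h]
  simp only [hpi, Fintype.card_piFinset, apply_dite card, card_singleton, card_univ,
    dite_eq_ite, prod_ite, prod_const_one, one_mul, prod_const]
  rw [filter_not, filter_mem_eq_inter, univ_inter, card_sdiff_of_subset (subset_univ T), card_univ]

theorem card_filter_div_card_eq_one_iff {α : Type*} [Fintype α] [Nonempty α] (p : α → Prop)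
    [DecidablePred p] : (#{x | p x} : ℝ) / Fintype.card α = 1 ↔ ∀ x, p x := by
  rw [div_eq_one_iff_eq (by positivity), ← card_univ, Nat.cast_inj, card_filter_eq_iff]
  simp

section

variable {E : Type*} [NormedAddCommGroup E] [InnerProductSpace ℂ E] {n : ℕ}
  {u : (Fin n → Bool) → E}

theorem Qop_apply_basis (hu : Orthonormal ℂ u) (j : Fin n) (w : Fin n → Bool) :
    Qop n u j (u w) = if w j then u w else 0 := by
  rw [orthonormal_iff_ite] at hu
  simp [Qop, ketbra, hu]

theorem Qop_apply_sum_smul (hu : Orthonormal ℂ u) (j : Fin n) (S : Finset (Fin n → Bool))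
    (c : ℂ) : Qop n u j (∑ w ∈ S, c • u w) = ∑ w ∈ S with w j, c • u w := by
  simp [Qop_apply_basis hu, sum_filter]

theorem sub_Qop_apply_sum_smul (hu : Orthonormal ℂ u) (j : Fin n) (S : Finset (Fin n → Bool))
    (c : ℂ) : ∑ w ∈ S, c • u w - Qop n u j (∑ w ∈ S, c • u w) = ∑ w ∈ S with !w j, c • u w := by
  rw [Qop_apply_sum_smul hu, sub_eq_iff_eq_add', ← sum_filter_add_sum_filter_not S (fun w => w j)]
  simp

/-- The operator `T_s^v` of `ProbU`, acting as the identity on symbols outside `A` or `Fin n`. -/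
def projStep (n : ℕ) (u : (Fin n → Bool) → E) (A : Finset ℕ) (v : {k // k ∈ A} → Bool) (x : E)
    (s : ℕ) : E :=
  if hs : s ∈ A then
    if hsn : s < n then
      (if v ⟨s, hs⟩ then Qop n u ⟨s, hsn⟩ x else x - Qop n u ⟨s, hsn⟩ x)
    else x
  else x

theorem projStep_sum_smul (hu : Orthonormal ℂ u) (A : Finset ℕ) (v : {k // k ∈ A} → Bool)
    (S : Finset (Fin n → Bool)) (c : ℂ) (s : ℕ) :
    projStep n u A v (∑ w ∈ S, c • u w) s =
      ∑ w ∈ S with ∀ i : Fin n, ∀ h : (i : ℕ) ∈ A, (i : ℕ) = s → w i = v ⟨i, h⟩, c • u w := by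
  unfold projStep
  by_cases hs : s ∈ A
  swap
  · rw [dif_neg hs, filter_true_of_mem fun _ _ (i : Fin n) hi (his : (i : ℕ) = s) =>
      absurd (his ▸ hi) hs]
  by_cases hsn : s < n
  swap
  · rw [dif_pos hs, dif_neg hsn, filter_true_of_mem fun _ _ (i : Fin n) _ (his : (i : ℕ) = s) =>
      absurd (his ▸ i.isLt) hsn]
  have hagree (w : Fin n → Bool) :
      (∀ i : Fin n, ∀ h : (i : ℕ) ∈ A, (i : ℕ) = s → w i = v ⟨i, h⟩) ↔
        w ⟨s, hsn⟩ = v ⟨s, hs⟩ :=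
    ⟨fun hw => hw ⟨s, hsn⟩ hs rfl, fun hw i _ his => by subst his; exact hw⟩
  simp only [dif_pos hs, dif_pos hsn, hagree]
  cases v ⟨s, hs⟩
  · simpa using sub_Qop_apply_sum_smul hu ⟨s, hsn⟩ S c
  · simpa using Qop_apply_sum_smul hu ⟨s, hsn⟩ S c

theorem foldl_projStep_sum_smul (hu : Orthonormal ℂ u) (A : Finset ℕ) (v : {k // k ∈ A} → Bool)
    (c : ℂ) (L : List ℕ) (S : Finset (Fin n → Bool)) :
    L.foldl (projStep n u A v) (∑ w ∈ S, c • u w) =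
      ∑ w ∈ S with ∀ i : Fin n, ∀ h : (i : ℕ) ∈ A, (i : ℕ) ∈ L → w i = v ⟨i, h⟩, c • u w := by
  induction L generalizing S with
  | nil => simp
  | cons s L ih =>
    rw [List.foldl_cons, projStep_sum_smul hu, ih, filter_filter]
    refine sum_congr (filter_congr fun w _ => ?_) fun _ _ => rfl
    simp only [List.mem_cons]
    grind

theorem inner_psiUnif_sum_smul (hu : Orthonormal ℂ u) (S : Finset (Fin n → Bool)) :
    ⟪psiUnif n u, ∑ w ∈ S, ((Real.sqrt (2 ^ n) : ℂ))⁻¹ • u w⟫_ℂ = #S / 2 ^ n := by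
  have hψ (w : Fin n → Bool) : ⟪psiUnif n u, u w⟫_ℂ = ((Real.sqrt (2 ^ n) : ℂ))⁻¹ := by
    rw [psiUnif, hu.inner_left_sum _ (mem_univ w)]
    simp
  have hsq : ((Real.sqrt (2 ^ n) : ℂ))⁻¹ * ((Real.sqrt (2 ^ n) : ℂ))⁻¹ = 1 / 2 ^ n := by
    rw [← mul_inv, ← Complex.ofReal_mul, Real.mul_self_sqrt (by positivity)]
    simp
  simp only [inner_sum, inner_smul_right, hψ, hsq, sum_const, nsmul_eq_mul]
  ring

theorem re_inner_psiUnif_foldl_projStep (hu : Orthonormal ℂ u) (A : Finset ℕ)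
    (hA : ∀ s ∈ A, s < n) (v : {k // k ∈ A} → Bool) :
    (⟪psiUnif n u, (A.sort (· ≤ ·)).foldl (projStep n u A v) (psiUnif n u)⟫_ℂ).re =
      (2 ^ #A)⁻¹ := by
  have hcard : #{w : Fin n → Bool | ∀ i : Fin n, ∀ h : (i : ℕ) ∈ A,
      (i : ℕ) ∈ A.sort (· ≤ ·) → w i = v ⟨i, h⟩} = 2 ^ (n - #A) := by
    have := card_filter_forall_mem_eq (A.attachFin hA) fun i hi => v ⟨i, (mem_attachFin hA).1 hi⟩
    simp only [Fintype.card_bool, Fintype.card_fin, card_attachFin, mem_attachFin] at this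
    simpa [mem_sort] using this
  have hle : #A ≤ n := by simpa using card_le_univ (A.attachFin hA)
  rw [psiUnif, foldl_projStep_sum_smul hu, ← psiUnif, inner_psiUnif_sum_smul hu, hcard,
    Nat.cast_pow, Nat.cast_ofNat, pow_sub₀ (2 : ℂ) two_ne_zero hle,
    mul_div_cancel_left₀ _ (pow_ne_zero _ two_ne_zero), ← Complex.ofReal_ofNat,
    ← Complex.ofReal_pow, ← Complex.ofReal_inv, Complex.ofReal_re]

theorem ProbU_eq_sum_foldl_projStep (α : PropForm) :
    ProbU n u α = ∑ v : {k // k ∈ α.symbols} → Bool with Sat α.symbols v α,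
      (⟪psiUnif n u,
        (α.symbols.sort (· ≤ ·)).foldl (projStep n u α.symbols v) (psiUnif n u)⟫_ℂ).re :=
  rfl

theorem ProbU_eq_card_div (hu : Orthonormal ℂ u) (α : PropForm) (hα : ∀ s ∈ α.symbols, s < n) :
    ProbU n u α = #{v : {k // k ∈ α.symbols} → Bool | Sat α.symbols v α} / 2 ^ #α.symbols := by
  simp only [ProbU_eq_sum_foldl_projStep, re_inner_psiUnif_foldl_projStep hu α.symbols hα,
    sum_const, nsmul_eq_mul, div_eq_mul_inv]

end

theorem stmt12_general (n : ℕ) (u : (Fin n → Bool) → H)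
    (hon : Orthonormal ℂ u)
    (α : PropForm) (hsym : ∀ s ∈ α.symbols, s < n) :
    ProbU n u α =
      ((Finset.univ.filter
          (fun v : {k // k ∈ α.symbols} → Bool => Sat α.symbols v α)).card : ℝ) /
        2 ^ α.symbols.card ∧
    (ProbU n u α = 1 ↔ ∀ v : {k // k ∈ α.symbols} → Bool, Sat α.symbols v α) := by
  have hcard : Fintype.card ({k // k ∈ α.symbols} → Bool) = 2 ^ #α.symbols := by simp
  refine ⟨ProbU_eq_card_div hon α hsym, ?_⟩
  rw [ProbU_eq_card_div hon α hsym, ← Nat.cast_ofNat, ← Nat.cast_pow, ← hcard,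
    card_filter_div_card_eq_one_iff]

/-- In the uniform quantum structure, for a formula `α` with symbols among `B_1, …, B_n`,
`Prob(α) = #{v : B_α → {0,1} : v ⊨ α} / 2^{|B_α|}`; consequently `Prob(α) = 1` iff `α` is
a tautology. -/
theorem stmt12 (n : ℕ) (hn : 1 ≤ n) (u : (Fin n → Bool) → H)
    (hon : Orthonormal ℂ u)
    (htot : (Submodule.span ℂ (Set.range u)).topologicalClosure = ⊤)
    (α : PropForm) (hsym : ∀ s ∈ α.symbols, s < n) :
    ProbU n u α =
      ((Finset.univ.filter
          (fun v : {k // k ∈ α.symbols} → Bool => Sat α.symbols v α)).card : ℝ) /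
        2 ^ α.symbols.card ∧
    (ProbU n u α = 1 ↔ ∀ v : {k // k ∈ α.symbols} → Bool, Sat α.symbols v α) :=
  stmt12_general n u hon α hsym
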